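/- arXiv:2306.07237 — 2 statements merged into one kernel-verified Lean document; each statement's English description precedes it below -/
import Mathlib

section
/- Let S be a set of at least 3 points in general position, and let p, q be two distinct points outside conv(S) such that S ∪ {p,q} is in general position. Let x, y be extreme points of S with x seen by p and y seen by q. If the segments px and qy cross in an interior point, then both x and y are seen by both p and q, and the segments py and qx are disjoint. -/
/-!
If `z` lies on both open segments `px` and `qy`, then in the triangle `pxy` any point `w` of the
hull on `py` other than `y` would give a point of the hull (on the cevian `wx`) inside the open
segment `qy`, contradicting that `q` sees `y`; symmetrically `q` sees `x`. The crossing makes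
`p q x y` a convex quadrilateral with diagonals `px`, `qy`, so its opposite sides `py` and `qx`
can only meet if `p`, `q`, `x` are collinear.
-/

/-- Points in the plane. -/
abbrev Pt := ℝ × ℝ

/-- No three distinct points of `S` are collinear. -/
def GenPos (S : Set Pt) : Prop :=
  ∀ a ∈ S, ∀ b ∈ S, ∀ c ∈ S, a ≠ b → a ≠ c → b ≠ c →
    ¬ Collinear ℝ ({a, b, c} : Set Pt)

/-- A point `p` outside the hull sees `q ∈ S` if the segment `pq` meets
the convex hull of `S` exactly in `{q}`. -/
def Sees (p q : Pt) (S : Set Pt) : Prop :=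
  segment ℝ p q ∩ convexHull ℝ S = {q}

/-- The set of points of `S` seen from `p`. -/
def SeenSet (p : Pt) (S : Set Pt) : Set Pt := {q ∈ S | Sees p q S}

/-- `x` is an extreme point of `S`. -/
def ExtremePt (S : Set Pt) (x : Pt) : Prop := x ∈ S ∧ x ∉ convexHull ℝ (S \ {x})

/-- `ab` is an edge of the boundary of the convex hull of `S`. -/
def HullEdge (S : Set Pt) (a b : Pt) : Prop :=
  a ∈ S ∧ b ∈ S ∧ a ≠ b ∧ segment ℝ a b ⊆ frontier (convexHull ℝ S)

/-- A list enumerating the extreme points of `S` in cyclic convex-position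
order along the boundary of the convex hull. -/
def HullCycle (S : Set Pt) (l : List Pt) : Prop :=
  l.Nodup ∧ {x | x ∈ l} = {x | ExtremePt S x} ∧
    ∀ i < l.length, HullEdge S l[i]! l[(i + 1) % l.length]!

/-- A contiguous arc along the boundary of the hull of `S`
beginning in `a` and ending in `c`. -/
def Arc (S : Set Pt) (a c : Pt) (A : List Pt) : Prop :=
  ∃ l, HullCycle S l ∧ ∃ k ≤ l.length,
    A = l.take k ∧ A.head? = some a ∧ A.getLast? = some c

/-- The (undirected) edges of the path given by the list `l`. -/
def edgeSet (l : List Pt) : Set (Set Pt) :=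
  {e | ∃ p ∈ l.zip l.tail, e = ({p.1, p.2} : Set Pt)}

/-- The straight-line drawing of the path `l` is crossing-free: two edges meet
only in common endpoints. -/
def PlaneList (l : List Pt) : Prop :=
  ∀ i j : ℕ, i < j → j + 1 < l.length →
    segment ℝ l[i]! l[i + 1]! ∩ segment ℝ l[j]! l[j + 1]! ⊆
      ({l[i]!, l[i + 1]!} ∩ {l[j]!, l[j + 1]!} : Set Pt)

/-- `l` visits every point of `S` exactly once. -/
def IsSpanningPath (S : Set Pt) (l : List Pt) : Prop :=
  l.Nodup ∧ {x | x ∈ l} = S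

/-- A crossing-free straight-line spanning path of `S`. -/
def PlaneSpanningPath (S : Set Pt) (l : List Pt) : Prop :=
  IsSpanningPath S l ∧ PlaneList l

/-- Two paths are edge-disjoint if no segment is an edge of both. -/
def EdgeDisjoint (P Q : List Pt) : Prop := ∀ e ∈ edgeSet P, e ∉ edgeSet Q

/-- `S` admits three pairwise edge-disjoint plane spanning paths. -/
def ThreePaths (S : Set Pt) : Prop :=
  ∃ P Q R : List Pt,
    PlaneSpanningPath S P ∧ PlaneSpanningPath S Q ∧ PlaneSpanningPath S R ∧
    EdgeDisjoint P Q ∧ EdgeDisjoint P R ∧ EdgeDisjoint Q R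

/-- `(S₁, S₂)` is a balanced separated partition of `S`. -/
def BSP (S S₁ S₂ : Finset Pt) : Prop :=
  S₁ ∪ S₂ = S ∧ Disjoint S₁ S₂ ∧
  (S₁.card : ℤ) - S₂.card ≤ 1 ∧ (S₂.card : ℤ) - S₁.card ≤ 1 ∧
  Disjoint (convexHull ℝ (S₁ : Set Pt)) (convexHull ℝ (S₂ : Set Pt))

/-- `ab` is an edge of the visibility graph `V(S₁,S₂)`. -/
def VisEdge (S₁ S₂ : Finset Pt) (a b : Pt) : Prop :=
  a ∈ S₁ ∧ b ∈ S₂ ∧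
  segment ℝ a b ∩ (convexHull ℝ (S₁ : Set Pt) ∪ convexHull ℝ (S₂ : Set Pt))
    = ({a, b} : Set Pt)

/-- Two segments cross: their open segments share a point. -/
def SegCross (a b c d : Pt) : Prop :=
  (openSegment ℝ a b ∩ openSegment ℝ c d).Nonempty

/-- Consecutive vertices of `l` alternate between `S₁` and `S₂`. -/
def Alternating (S₁ S₂ : Finset Pt) (l : List Pt) : Prop :=
  ∀ i, i + 1 < l.length →
    (l[i]! ∈ S₁ ∧ l[i + 1]! ∈ S₂) ∨ (l[i]! ∈ S₂ ∧ l[i + 1]! ∈ S₁)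

/-- A zig-zag path for the balanced separated partition `(S₁,S₂)` of `S`. -/
def ZigZag (S S₁ S₂ : Finset Pt) (l : List Pt) : Prop :=
  PlaneSpanningPath (S : Set Pt) l ∧ Alternating S₁ S₂ l

/-- Twice the signed area of the triangle `a b c`; positive iff `c` lies to the
left of the directed line `ab`. -/
def ccw (a b c : Pt) : ℝ :=
  (b.1 - a.1) * (c.2 - a.2) - (b.2 - a.2) * (c.1 - a.1)

/-- `uv` is a halving segment of `S`: the line through `u` and `v` has exactly
`(|S| - 2)/2` points of `S` strictly on each side. -/
def Halving (S : Finset Pt) (u v : Pt) : Prop :=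
  u ∈ S ∧ v ∈ S ∧ u ≠ v ∧
  2 * ((S : Set Pt) ∩ {s | 0 < ccw u v s}).ncard = S.card - 2 ∧
  2 * ((S : Set Pt) ∩ {s | ccw u v s < 0}).ncard = S.card - 2

/-- The wheel configuration: all points but one in convex position, and one
interior point `y` such that every line through `y` and another point of the
configuration halves the remaining points. -/
def IsWheel (S : Finset Pt) : Prop :=
  ∃ y ∈ S,
    (∀ x ∈ S.erase y, x ∉ convexHull ℝ (((S.erase y : Finset Pt) : Set Pt) \ {x})) ∧
    y ∈ interior (convexHull ℝ ((S.erase y : Finset Pt) : Set Pt)) ∧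
    ∀ x ∈ S.erase y, Halving S y x

/-- `v` is a switchable path for the balanced separated partition `(S₁,S₂)` of
`S`: its edges are visibility edges, they cross a separating line of the
partition in order along the line, and every open triangle spanned by three
consecutive vertices contains no point of `S`. -/
def Switchable (S S₁ S₂ : Finset Pt) (v : List Pt) : Prop :=
  2 ≤ v.length ∧
  (∀ i, i + 1 < v.length →
    VisEdge S₁ S₂ v[i]! v[i + 1]! ∨ VisEdge S₁ S₂ v[i + 1]! v[i]!) ∧
  (∃ (f : Pt →ₗ[ℝ] ℝ) (c : ℝ),
    (∀ x ∈ S₁, f x < c) ∧ (∀ x ∈ S₂, c < f x) ∧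
    ∃ x : ℕ → Pt,
      (∀ i, i + 1 < v.length → x i ∈ segment ℝ v[i]! v[i + 1]! ∧ f (x i) = c) ∧
      ∃ g : Pt →ₗ[ℝ] ℝ, ∀ i j, i < j → j + 1 < v.length → g (x i) < g (x j)) ∧
  ∀ i, i + 2 < v.length →
    ∀ s ∈ S, s ∉ interior (convexHull ℝ ({v[i]!, v[i + 1]!, v[i + 2]!} : Set Pt))

/-- `u` is a bridged vertex of the partition `(S₁,S₂)` of `S`: an endpoint of an
edge of the boundary of `conv S` with one endpoint in each class. -/
def Bridged (S S₁ S₂ : Finset Pt) (u : Pt) : Prop :=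
  ∃ w, HullEdge (S : Set Pt) u w ∧
    ((u ∈ S₁ ∧ w ∈ S₂) ∨ (u ∈ S₂ ∧ w ∈ S₁))

/-- `u` is incident with at least two edges of the visibility graph. -/
def IncidentVisEdges2 (S₁ S₂ : Finset Pt) (u : Pt) : Prop :=
  ∃ w₁ w₂, w₁ ≠ w₂ ∧
    (VisEdge S₁ S₂ u w₁ ∨ VisEdge S₁ S₂ w₁ u) ∧
    (VisEdge S₁ S₂ u w₂ ∨ VisEdge S₁ S₂ w₂ u)

section

variable {E : Type*} [AddCommGroup E] [Module ℝ E]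

theorem eq_zero_of_smul_sub_add_smul_sub_eq_zero {p q x : E} (h : ¬ Collinear ℝ {p, q, x})
    {a b : ℝ} (hab : a • (q - p) + b • (x - p) = 0) : a = 0 ∧ b = 0 := by
  by_contra hne
  apply h
  by_cases hb : b = 0
  · have ha : a ≠ 0 := fun ha => hne ⟨ha, hb⟩
    have hqp : q = p := by
      simpa [hb, ha, sub_eq_zero] using hab
    rw [hqp, Set.insert_eq_of_mem (Set.mem_insert p _)]
    exact collinear_pair ℝ p x
  · have hx : x ∈ line[ℝ, p, q] := by
      convert AffineMap.lineMap_mem_affineSpan_pair (-a / b) p q using 1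
      apply smul_right_injective E hb
      simp only [AffineMap.lineMap_apply, vsub_eq_sub, vadd_eq_add, smul_add, smul_smul,
        mul_div_cancel₀ _ hb]
      linear_combination (norm := module) hab
    rw [Set.pair_comm q x, Set.insert_comm p x]
    exact collinear_insert_of_mem_affineSpan_pair hx

theorem segment_inter_openSegment_nonempty_of_mem_openSegment {p q x y z w : E}
    (hz₁ : z ∈ openSegment ℝ p x) (hz₂ : z ∈ openSegment ℝ q y)
    (hw : w ∈ openSegment ℝ p y) : (segment ℝ w x ∩ openSegment ℝ q y).Nonempty := by
  obtain ⟨a₁, b₁, ha₁, hb₁, hab₁, hz₁⟩ := hz₁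
  obtain ⟨a₂, b₂, ha₂, hb₂, hab₂, hz₂⟩ := hz₂
  obtain ⟨a, b, ha, hb, hab, rfl⟩ := hw
  obtain rfl : a₁ = 1 - b₁ := eq_sub_of_add_eq hab₁
  obtain rfl : a₂ = 1 - b₂ := eq_sub_of_add_eq hab₂
  obtain rfl : a = 1 - b := eq_sub_of_add_eq hab
  have hD : 0 < 1 - b * b₁ := by nlinarith
  set d := (1 - b * b₁)⁻¹
  have hdD : d * (1 - b * b₁) = 1 := inv_mul_cancel₀ hD.ne'
  -- the point where the cevian `wx` of the triangle `pxy` meets the cevian `yz`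
  refine ⟨(d * ((1 - b) * (1 - b₂))) • q + (d * ((1 - b) * b₂ + (1 - b₁) * b)) • y,
    ⟨d * (1 - b₁), d * ((1 - b) * b₁), by positivity, by positivity, ?_, ?_⟩,
    ⟨_, _, by positivity, by positivity, ?_, rfl⟩⟩
  · linear_combination hdD
  · linear_combination (norm := module) (d * (1 - b)) • (hz₁ - hz₂)
  · linear_combination hdD

theorem segment_inter_eq_singleton_of_openSegment_inter {K : Set E} (hK : Convex ℝ K)
    {p q x y z : E} (hp : p ∉ K) (hq : q ∉ K) (hx : x ∈ K)
    (hqy : segment ℝ q y ∩ K = {y})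
    (hz₁ : z ∈ openSegment ℝ p x) (hz₂ : z ∈ openSegment ℝ q y) :
    segment ℝ p y ∩ K = {y} := by
  have hy : y ∈ K := (Set.eq_singleton_iff_unique_mem.1 hqy).1.2
  refine Set.eq_singleton_iff_unique_mem.2 ⟨⟨right_mem_segment ℝ p y, hy⟩, ?_⟩
  rintro w ⟨hw, hwK⟩
  by_contra hwy
  have hw : w ∈ openSegment ℝ p y :=
    mem_openSegment_of_ne_left_right (fun hpw => hp (hpw ▸ hwK)) (Ne.symm hwy) hw
  obtain ⟨c, hcK, hc⟩ := segment_inter_openSegment_nonempty_of_mem_openSegment hz₁ hz₂ hw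
  obtain rfl : c = y := (Set.eq_singleton_iff_unique_mem.1 hqy).2 c
    ⟨openSegment_subset_segment ℝ q y hc, hK.segment_subset hwK hx hcK⟩
  rw [right_mem_openSegment_iff] at hc
  exact hq (hc ▸ hy)

theorem segment_inter_segment_eq_empty_of_openSegment_inter {p q x y z : E}
    (h : ¬ Collinear ℝ {p, q, x})
    (hz₁ : z ∈ openSegment ℝ p x) (hz₂ : z ∈ openSegment ℝ q y) :
    segment ℝ p y ∩ segment ℝ q x = ∅ := by
  refine Set.eq_empty_iff_forall_notMem.2 fun w ⟨hw₁, hw₂⟩ => ?_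
  obtain ⟨a₁, b₁, ha₁, hb₁, hab₁, hz₁⟩ := hz₁
  obtain ⟨a₂, b₂, ha₂, hb₂, hab₂, hz₂⟩ := hz₂
  obtain ⟨a₃, b₃, ha₃, hb₃, hab₃, hw₁⟩ := hw₁
  obtain ⟨a₄, b₄, ha₄, hb₄, hab₄, hw₂⟩ := hw₂
  obtain rfl : a₁ = 1 - b₁ := eq_sub_of_add_eq hab₁
  obtain rfl : a₂ = 1 - b₂ := eq_sub_of_add_eq hab₂
  obtain rfl : a₃ = 1 - b₃ := eq_sub_of_add_eq hab₃
  obtain rfl : a₄ = 1 - b₄ := eq_sub_of_add_eq hab₄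
  obtain ⟨hcq, hcx⟩ := eq_zero_of_smul_sub_add_smul_sub_eq_zero h
    (a := b₂ * (1 - b₄) + b₃ * (1 - b₂)) (b := b₂ * b₄ - b₃ * b₁) <| by
      linear_combination (norm := module) b₂ • (hw₂ - hw₁) + b₃ • (hz₂ - hz₁)
  obtain rfl : b₄ = 1 := by nlinarith [mul_nonneg hb₃ ha₂.le]
  obtain rfl : b₃ = 0 := by nlinarith [mul_nonneg hb₃ ha₂.le]
  linarith

end

theorem stmt_1_general (S : Finset Pt) (p q x y : Pt) (hpq : p ≠ q)
    (hp : p ∉ convexHull ℝ (S : Set Pt)) (hq : q ∉ convexHull ℝ (S : Set Pt))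
    (hgp : GenPos ((S : Set Pt) ∪ {p, q}))
    (hx : ExtremePt (S : Set Pt) x)
    (hxp : Sees p x (S : Set Pt)) (hyq : Sees q y (S : Set Pt))
    (hcross : SegCross p x q y) :
    Sees p y (S : Set Pt) ∧ Sees q x (S : Set Pt) ∧
      segment ℝ p y ∩ segment ℝ q x = ∅ := by
  obtain ⟨z, hz₁, hz₂⟩ := hcross
  have hxK : x ∈ convexHull ℝ (S : Set Pt) := subset_convexHull ℝ _ hx.1
  have hyK : y ∈ convexHull ℝ (S : Set Pt) := (Set.eq_singleton_iff_unique_mem.1 hyq).1.2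
  have hpqx : ¬ Collinear ℝ ({p, q, x} : Set Pt) :=
    hgp p (by simp) q (by simp) x (Or.inl hx.1) hpq
      (fun h => hp (h ▸ hxK)) (fun h => hq (h ▸ hxK))
  exact ⟨segment_inter_eq_singleton_of_openSegment_inter (convex_convexHull ℝ _) hp hq hxK
      hyq hz₁ hz₂,
    segment_inter_eq_singleton_of_openSegment_inter (convex_convexHull ℝ _) hq hp hyK
      hxp hz₂ hz₁,
    segment_inter_segment_eq_empty_of_openSegment_inter hpqx hz₁ hz₂⟩

theorem stmt_1 (S : Finset Pt) (h3 : 3 ≤ S.card) (p q x y : Pt) (hpq : p ≠ q)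
    (hp : p ∉ convexHull ℝ (S : Set Pt)) (hq : q ∉ convexHull ℝ (S : Set Pt))
    (hgp : GenPos ((S : Set Pt) ∪ {p, q}))
    (hx : ExtremePt (S : Set Pt) x) (hy : ExtremePt (S : Set Pt) y)
    (hxp : Sees p x (S : Set Pt)) (hyq : Sees q y (S : Set Pt))
    (hcross : SegCross p x q y) :
    Sees p y (S : Set Pt) ∧ Sees q x (S : Set Pt) ∧
      segment ℝ p y ∩ segment ℝ q x = ∅ :=
  stmt_1_general S p q x y hpq hp hq hgp hx hxp hyq hcross
end

section
/- Let S be a set of at least 3 points in general position and let p, q be two distinct points outside conv(S) with S ∪ {p,q} in general position. Suppose |S(p) ∪ S(q)| ≥ 3, where S(p), S(q) are the sets of points of S seen from p and q respectively. Then for any point c ∈ S(q), there exist a ∈ S(p) and b ∈ S(q) \ {c} such that the segments ap and bq are disjoint. -/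
/-!
Suppose every segment `a p` with `a ∈ S(p)` met every segment `b q` with `b ∈ S(q) \ {c}`.
A crossing transfers visibility: if `p` sees `a` and `a p` crosses `b q` with `b ∈ conv S`,
then `q` sees `a` too, because two cevians of a triangle meet. Since each outside point sees
at least two points of `S` (its two tangent points), this gives `S(p) ⊆ S(q)` and
`S(q) \ {c} ⊆ S(p)`. Hence `|S(q)| ≥ 3`, and two points `b₁ ≠ b₂` of `S(q) \ {c}` lie in `S(p)`,
so `p b₁` crosses `q b₂` and `p b₂` crosses `q b₁`. In general position the orientations forced
by the two crossings are incompatible.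
-/

section Convex

variable {E : Type*} [AddCommGroup E] [Module ℝ E]

theorem eq_of_mem_convexHull_of_forall_lt (f : E →ₗ[ℝ] ℝ) {s : Set E} {a x : E}
    (hs : ∀ y ∈ s, y ≠ a → f y < f a) (hx : x ∈ convexHull ℝ s) (hax : f a ≤ f x) :
    x = a := by
  have hsub : s ⊆ insert a (s \ {a}) := fun y hy => by
    by_cases h : y = a <;> simp [h, hy]
  replace hx := convexHull_mono hsub hx
  rcases (s \ {a}).eq_empty_or_nonempty with he | hne
  · simpa [he] using hx
  rw [convexHull_insert hne, convexJoin_singleton_left, Set.mem_iUnion₂] at hx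
  obtain ⟨y, hy, α, β, hα, hβ, hαβ, rfl⟩ := hx
  have hya : f y < f a := convexHull_min (fun z hz => hs z hz.1 hz.2)
    (convex_halfSpace_lt f.isLinear _) hy
  have hβ0 : β = 0 := by
    simp only [map_add, map_smul, smul_eq_mul] at hax
    obtain rfl : α = 1 - β := by linarith
    by_contra hβ0
    nlinarith [mul_lt_mul_of_pos_left hya (hβ.lt_of_ne' hβ0)]
  simp [hβ0, show α = 1 by linarith]

theorem segment_inter_convexHull_eq_singleton (f : E →ₗ[ℝ] ℝ) {s : Set E} {r a : E}
    (ha : a ∈ s) (hr : f r = f a) (hs : ∀ y ∈ s, y ≠ a → f y < f a) :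
    segment ℝ r a ∩ convexHull ℝ s = {a} := by
  refine Set.eq_singleton_iff_unique_mem.2 ⟨⟨right_mem_segment ℝ r a, subset_convexHull ℝ s ha⟩, ?_⟩
  rintro x ⟨hxra, hx⟩
  have hline : segment ℝ r a ⊆ {z | f z = f a} :=
    (convex_hyperplane f.isLinear _).segment_subset hr rfl
  exact eq_of_mem_convexHull_of_forall_lt f hs hx (hline hxra).ge

theorem segment_inter_segment_nonempty {a b c x y : E} (hy : y ∈ segment ℝ a b)
    (hx : x ∈ segment ℝ a c) : (segment ℝ c y ∩ segment ℝ b x).Nonempty := by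
  rw [segment_eq_image] at hx hy
  obtain ⟨s, ⟨hs0, hs1⟩, rfl⟩ := hy
  obtain ⟨t, ⟨ht0, ht1⟩, rfl⟩ := hx
  rcases (mul_le_one₀ hs1 ht0 ht1).lt_or_eq with hst | hst
  · have hd : 0 < 1 - s * t := by linarith
    refine ⟨(1 - (1 - t) / (1 - s * t)) • c + ((1 - t) / (1 - s * t)) • ((1 - s) • a + s • b),
      ?_, ?_⟩
    · rw [segment_eq_image]
      exact ⟨(1 - t) / (1 - s * t), ⟨by positivity, by rw [div_le_one hd]; nlinarith⟩, rfl⟩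
    · rw [segment_eq_image]
      refine ⟨(1 - s) / (1 - s * t), ⟨by positivity, by rw [div_le_one hd]; nlinarith⟩, ?_⟩
      field_simp
      module
  · obtain rfl : s = 1 := by nlinarith
    obtain rfl : t = 1 := by nlinarith
    exact ⟨b, by simp [right_mem_segment], by simp [left_mem_segment]⟩

theorem segment_inter_eq_singleton_of_mem_segment {K : Set E} (hK : Convex ℝ K)
    {r r' e m y : E} (hm : m ∈ K) (hre : segment ℝ r e ∩ K = {e})
    (hy : y ∈ segment ℝ r e) (hy' : y ∈ segment ℝ r' m) (he : e ∉ segment ℝ r' m) :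
    segment ℝ r' e ∩ K = {e} := by
  have heK : e ∈ K := (hre.symm.subset rfl).2
  refine Set.eq_singleton_iff_unique_mem.2 ⟨⟨right_mem_segment ℝ r' e, heK⟩, ?_⟩
  rintro x ⟨hx, hxK⟩
  -- the cevians `e y` and `m x` of the triangle `r' m e` meet in a point `w` of `[r, e] ∩ K`
  obtain ⟨w, hwe, hwm⟩ := segment_inter_segment_nonempty hy' hx
  have hw : w ∈ segment ℝ r e ∩ K :=
    ⟨(convex_segment r e).segment_subset (right_mem_segment ℝ r e) hy hwe,
      hK.segment_subset hm hxK hwm⟩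
  rw [hre, Set.mem_singleton_iff] at hw
  rw [hw, mem_segment_iff_wbtw] at hwm
  by_contra hxe
  exact he (mem_segment_iff_wbtw.2
    ((mem_segment_iff_wbtw.1 hx).trans_expand_right hwm.symm hxe))

end Convex

theorem collinear_of_ccw_eq_zero {a b c : Pt} (h : ccw a b c = 0) :
    Collinear ℝ ({a, b, c} : Set Pt) := by
  rcases eq_or_ne b a with rfl | hba
  · simpa using collinear_pair ℝ b c
  have hv : (b.1 - a.1) ^ 2 + (b.2 - a.2) ^ 2 ≠ 0 := fun h0 =>
    hba (Prod.ext (by nlinarith) (by nlinarith))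
  -- a point `x` with `ccw a b x = 0` is `a` plus its orthogonal projection onto `b - a`
  have onLine : ∀ x : Pt, ccw a b x = 0 → ∃ t : ℝ, x = t • (b - a) +ᵥ a := fun x hx =>
    ⟨((x.1 - a.1) * (b.1 - a.1) + (x.2 - a.2) * (b.2 - a.2)) /
        ((b.1 - a.1) ^ 2 + (b.2 - a.2) ^ 2), by
      unfold ccw at hx
      ext
      · simp only [vadd_eq_add, Prod.fst_add, Prod.smul_fst, Prod.fst_sub, smul_eq_mul]
        field_simp
        linear_combination (a.2 - b.2) * hx
      · simp only [vadd_eq_add, Prod.snd_add, Prod.smul_snd, Prod.snd_sub, smul_eq_mul]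
        field_simp
        linear_combination (b.1 - a.1) * hx⟩
  rw [collinear_iff_of_mem (Set.mem_insert a _)]
  refine ⟨b - a, ?_⟩
  simp only [Set.mem_insert_iff, Set.mem_singleton_iff, forall_eq_or_imp, forall_eq]
  exact ⟨onLine a (by unfold ccw; ring), onLine b (by unfold ccw; ring), onLine c h⟩

namespace GenPos

variable {T : Set Pt} {a b c : Pt}

theorem mono {S : Set Pt} (h : GenPos T) (hST : S ⊆ T) : GenPos S :=
  fun a ha b hb c hc => h a (hST ha) b (hST hb) c (hST hc)

theorem ccw_ne_zero (h : GenPos T) (ha : a ∈ T) (hb : b ∈ T) (hc : c ∈ T)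
    (hab : a ≠ b) (hac : a ≠ c) (hbc : b ≠ c) : ccw a b c ≠ 0 :=
  fun h0 => h a ha b hb c hc hab hac hbc (collinear_of_ccw_eq_zero h0)

theorem notMem_segment (h : GenPos T) (ha : a ∈ T) (hb : b ∈ T) (hc : c ∈ T)
    (hab : a ≠ b) (hac : a ≠ c) (hbc : b ≠ c) : b ∉ segment ℝ a c :=
  fun hs => h a ha b hb c hc hab hac hbc (mem_segment_iff_wbtw.1 hs).collinear

end GenPos

theorem sees_of_forall_mul_ccw_neg {S : Set Pt} {r a : Pt} (σ : ℝ) (ha : a ∈ S)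
    (hS : ∀ s ∈ S, s ≠ a → σ * ccw r a s < 0) : Sees r a S := by
  let f : Pt →ₗ[ℝ] ℝ :=
    σ • ((a.1 - r.1) • LinearMap.snd ℝ ℝ ℝ - (a.2 - r.2) • LinearMap.fst ℝ ℝ ℝ)
  have hf : ∀ x, f x - f a = σ * ccw r a x := fun x => by
    simp [f, ccw]
    ring
  refine segment_inter_convexHull_eq_singleton f ha ?_ fun s hs hsa => ?_
  · simpa [ccw, sub_eq_zero] using hf r
  · linarith [hf s, hS s hs hsa]

theorem exists_forall_dot_pos_of_notMem_convexHull {S : Set Pt} (hS : S.Finite) {r : Pt}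
    (hr : r ∉ convexHull ℝ S) :
    ∃ u : Pt, ∀ s ∈ S, 0 < u.1 * (s.1 - r.1) + u.2 * (s.2 - r.2) := by
  obtain ⟨f, c, hfr, hf⟩ := geometric_hahn_banach_point_closed (convex_convexHull ℝ S)
    (hS.isCompact_convexHull ℝ).isClosed hr
  have hcoord : ∀ x : Pt, f x = f (1, 0) * x.1 + f (0, 1) * x.2 := fun x => by
    conv_lhs => rw [show x = x.1 • ((1 : ℝ), (0 : ℝ)) + x.2 • ((0 : ℝ), (1 : ℝ)) by ext <;> simp]
    rw [map_add, map_smul, map_smul, smul_eq_mul, smul_eq_mul]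
    ring
  refine ⟨(f (1, 0), f (0, 1)), fun s hs => ?_⟩
  linarith [hf s (subset_convexHull ℝ S hs), hcoord s, hcoord r]

theorem exists_forall_mul_ccw_neg {S : Finset Pt} (hS : S.Nonempty) {r u : Pt} (σ : ℝ)
    (hσ : σ ≠ 0) (hu : ∀ s ∈ S, 0 < u.1 * (s.1 - r.1) + u.2 * (s.2 - r.2))
    (hccw : ∀ s ∈ S, ∀ s' ∈ S, s ≠ s' → ccw r s s' ≠ 0) :
    ∃ a ∈ S, ∀ s ∈ S, s ≠ a → σ * ccw r a s < 0 := by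
  -- `τ s` is the slope of `s - r` in the frame with first axis `u`; extremal slopes are tangents
  let d : Pt → ℝ := fun s => u.1 * (s.1 - r.1) + u.2 * (s.2 - r.2)
  let τ : Pt → ℝ := fun s => (u.1 * (s.2 - r.2) - u.2 * (s.1 - r.1)) / d s
  have hτ : ∀ a ∈ S, ∀ s ∈ S, ccw r a s * (u.1 ^ 2 + u.2 ^ 2) = d a * d s * (τ s - τ a) :=
    fun a ha s hs => by
      have : d a ≠ 0 := (hu a ha).ne'
      have : d s ≠ 0 := (hu s hs).ne'
      simp only [τ]
      field_simp
      simp only [d, ccw]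
      ring
  obtain ⟨s₀, hs₀⟩ := hS
  have hu0 : 0 < u.1 ^ 2 + u.2 ^ 2 := by
    by_contra h
    have h1 : u.1 = 0 := by nlinarith
    have h2 : u.2 = 0 := by nlinarith
    simpa [h1, h2] using hu s₀ hs₀
  obtain ⟨a, ha, hmax⟩ := S.exists_max_image (fun s => σ * τ s) ⟨s₀, hs₀⟩
  refine ⟨a, ha, fun s hs hsa => ?_⟩
  have hne : σ * ccw r a s ≠ 0 := mul_ne_zero hσ (hccw a ha s hs (Ne.symm hsa))
  have hle : σ * ccw r a s * (u.1 ^ 2 + u.2 ^ 2) ≤ 0 := by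
    rw [mul_assoc, hτ a ha s hs]
    nlinarith [hmax s hs, mul_pos (hu a ha) (hu s hs)]
  exact hne.lt_of_le (nonpos_of_mul_nonpos_left hle hu0)

theorem exists_ne_mem_seenSet {S : Finset Pt} (hS : 2 ≤ S.card) {r : Pt}
    (hr : r ∉ convexHull ℝ (S : Set Pt)) (hgp : GenPos ((S : Set Pt) ∪ {r})) :
    ∃ a ∈ SeenSet r S, ∃ a' ∈ SeenSet r S, a ≠ a' := by
  have hrS : ∀ s ∈ S, s ≠ r := fun s hs => ne_of_mem_of_not_mem (subset_convexHull ℝ _ hs) hr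
  have hccw : ∀ s ∈ S, ∀ s' ∈ S, s ≠ s' → ccw r s s' ≠ 0 := fun s hs s' hs' h =>
    hgp.ccw_ne_zero (by simp) (by simp [hs]) (by simp [hs']) (hrS s hs).symm (hrS s' hs').symm h
  obtain ⟨u, hu⟩ := exists_forall_dot_pos_of_notMem_convexHull S.finite_toSet hr
  have hne : S.Nonempty := Finset.card_pos.1 (by omega)
  obtain ⟨a, ha, hleft⟩ := exists_forall_mul_ccw_neg hne 1 one_ne_zero hu hccw
  obtain ⟨a', ha', hright⟩ := exists_forall_mul_ccw_neg hne (-1) (by norm_num) hu hccw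
  refine ⟨a, ⟨ha, sees_of_forall_mul_ccw_neg 1 ha hleft⟩,
    a', ⟨ha', sees_of_forall_mul_ccw_neg (-1) ha' hright⟩, ?_⟩
  rintro rfl
  obtain ⟨s, hs, hsa⟩ := S.exists_mem_ne (by omega) a
  linarith [hleft s hs hsa, hright s hs hsa]

theorem Sees.of_segment_inter {S : Set Pt} {r r' e m : Pt} (hgp : GenPos (S ∪ {r'}))
    (hr' : r' ∉ convexHull ℝ S) (he : e ∈ S) (hm : m ∈ S) (hem : e ≠ m) (hsee : Sees r e S)
    (hcross : (segment ℝ e r ∩ segment ℝ m r').Nonempty) : Sees r' e S := by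
  obtain ⟨y, hy, hy'⟩ := hcross
  have hr'S : ∀ s ∈ S, s ≠ r' := fun s hs => ne_of_mem_of_not_mem (subset_convexHull ℝ S hs) hr'
  rw [segment_symm] at hy hy'
  exact segment_inter_eq_singleton_of_mem_segment (convex_convexHull ℝ S)
    (subset_convexHull ℝ S hm) hsee hy hy' <| hgp.notMem_segment (by simp) (by simp [he])
      (by simp [hm]) (hr'S e he).symm (hr'S m hm).symm hem

theorem subset_seenSet_of_segment_inter {S A : Set Pt} {p q b : Pt} (hgp : GenPos (S ∪ {q}))
    (hq : q ∉ convexHull ℝ S) (hA : A ⊆ SeenSet p S) (hb : b ∈ SeenSet q S)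
    (hcross : ∀ a ∈ A, (segment ℝ a p ∩ segment ℝ b q).Nonempty) : A ⊆ SeenSet q S := by
  intro a ha
  rcases eq_or_ne a b with rfl | hab
  · exact hb
  exact ⟨(hA ha).1, (hA ha).2.of_segment_inter hgp hq (hA ha).1 hb.1 hab (hcross a ha)⟩

theorem ccw_mul_pos_of_segment_inter {p q A B : Pt} (hA : ccw p q A ≠ 0) (hB : ccw p q B ≠ 0)
    (hAB : ccw p A B ≠ 0) (h : (segment ℝ A p ∩ segment ℝ B q).Nonempty) :
    0 < ccw p q A * ccw p A B ∧ 0 < ccw p q A * ccw p q B := by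
  obtain ⟨z, ⟨s, s', hs, hs', hss', rfl⟩, ⟨t, t', ht, ht', htt', hz⟩⟩ := h
  obtain rfl : s' = 1 - s := by linarith
  obtain rfl : t' = 1 - t := by linarith
  have e1 := congrArg Prod.fst hz
  have e2 := congrArg Prod.snd hz
  simp only [Prod.fst_add, Prod.snd_add, Prod.smul_fst, Prod.smul_snd, smul_eq_mul] at e1 e2
  have R1 : (1 - t) * ccw p q A = t * ccw p A B := by
    unfold ccw; linear_combination (A.2 - p.2) * e1 - (A.1 - p.1) * e2
  have R2 : s * ccw p q A = t * ccw p q B := by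
    unfold ccw; linear_combination (q.2 - p.2) * e1 - (q.1 - p.1) * e2
  have ht0 : 0 < t := ht.lt_of_ne fun h0 => hA (by simpa [← h0] using R1)
  constructor
  · have : 0 < (1 - t) * (ccw p q A * ccw p A B) := by
      rw [← mul_assoc, R1, mul_assoc]
      exact mul_pos ht0 (mul_self_pos.2 hAB)
    exact pos_of_mul_pos_right this ht'
  · have : 0 < s * (ccw p q A * ccw p q B) := by
      rw [← mul_assoc, R2, mul_assoc]
      exact mul_pos ht0 (mul_self_pos.2 hB)
    exact pos_of_mul_pos_right this hs

theorem segment_inter_eq_empty_of_segment_inter {S : Set Pt} {p q A B : Pt}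
    (hgp : GenPos (S ∪ {p, q})) (hp : p ∉ convexHull ℝ S) (hq : q ∉ convexHull ℝ S)
    (hpq : p ≠ q) (hA : A ∈ S) (hB : B ∈ S) (hAB : A ≠ B)
    (h : (segment ℝ A p ∩ segment ℝ B q).Nonempty) : segment ℝ B p ∩ segment ℝ A q = ∅ := by
  have hne : ∀ {r x}, r ∉ convexHull ℝ S → x ∈ S → r ≠ x :=
    fun hr hx => (ne_of_mem_of_not_mem (subset_convexHull ℝ S hx) hr).symm
  have hpqA := hgp.ccw_ne_zero (by simp) (by simp) (by simp [hA]) hpq (hne hp hA) (hne hq hA)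
  have hpqB := hgp.ccw_ne_zero (by simp) (by simp) (by simp [hB]) hpq (hne hp hB) (hne hq hB)
  have hpAB := hgp.ccw_ne_zero (by simp) (by simp [hA]) (by simp [hB]) (hne hp hA) (hne hp hB) hAB
  have hpBA : ccw p B A = -ccw p A B := by unfold ccw; ring
  rw [← Set.not_nonempty_iff_eq_empty]
  intro h'
  obtain ⟨h1, h2⟩ := ccw_mul_pos_of_segment_inter hpqA hpqB hpAB h
  obtain ⟨h3, -⟩ := ccw_mul_pos_of_segment_inter hpqB hpqA (hpBA ▸ neg_ne_zero.2 hpAB) h'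
  rw [hpBA] at h3
  nlinarith [mul_pos (mul_pos h1 h2) h3, sq_nonneg (ccw p q A * ccw p q B * ccw p A B)]

theorem stmt_2 (S : Finset Pt) (h3 : 3 ≤ S.card) (p q : Pt) (hpq : p ≠ q)
    (hp : p ∉ convexHull ℝ (S : Set Pt)) (hq : q ∉ convexHull ℝ (S : Set Pt))
    (hgp : GenPos ((S : Set Pt) ∪ {p, q}))
    (hbig : 3 ≤ (SeenSet p (S : Set Pt) ∪ SeenSet q (S : Set Pt)).ncard)
    (c : Pt) (hc : c ∈ SeenSet q (S : Set Pt)) :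
    ∃ a ∈ SeenSet p (S : Set Pt), ∃ b ∈ SeenSet q (S : Set Pt), b ≠ c ∧
      segment ℝ a p ∩ segment ℝ b q = ∅ := by
  by_contra! hcross
  set P := SeenSet p (S : Set Pt)
  set Q := SeenSet q (S : Set Pt)
  have hgp_p : GenPos ((S : Set Pt) ∪ {p}) := hgp.mono (by gcongr; simp)
  have hgp_q : GenPos ((S : Set Pt) ∪ {q}) := hgp.mono (by gcongr; simp)
  obtain ⟨a₀, ha₀, -⟩ := exists_ne_mem_seenSet (by omega) hp hgp_p
  obtain ⟨b₀, hb₀, hb₀c⟩ : ∃ b ∈ Q, b ≠ c := by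
    obtain ⟨b, hb, b', hb', hbb'⟩ := exists_ne_mem_seenSet (by omega) hq hgp_q
    by_cases hbc : b = c
    exacts [⟨b', hb', hbc ▸ hbb'.symm⟩, ⟨b, hb, hbc⟩]
  have hPQ : P ⊆ Q := subset_seenSet_of_segment_inter hgp_q hq subset_rfl hb₀
    fun a ha => hcross a ha b₀ hb₀ hb₀c
  have hQP : Q \ {c} ⊆ P := subset_seenSet_of_segment_inter hgp_p hp Set.sdiff_subset ha₀
    fun b hb => Set.inter_comm _ _ ▸ hcross a₀ ha₀ b hb.1 hb.2
  obtain ⟨b₁, b₂, hb₁, hb₂, h12⟩ : ∃ b₁ b₂, b₁ ∈ Q \ {c} ∧ b₂ ∈ Q \ {c} ∧ b₁ ≠ b₂ := by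
    have hQfin : Q.Finite := S.finite_toSet.subset fun x hx => hx.1
    rw [Set.union_eq_self_of_subset_left hPQ] at hbig
    refine (Set.one_lt_ncard_iff (hQfin.subset Set.sdiff_subset)).1 ?_
    rw [Set.ncard_sdiff_singleton_of_mem hc]
    omega
  exact (hcross b₂ (hQP hb₂) b₁ hb₁.1 hb₁.2).ne_empty <|
    segment_inter_eq_empty_of_segment_inter hgp hp hq hpq hb₁.1.1 hb₂.1.1 h12
      (hcross b₁ (hQP hb₁) b₂ hb₂.1 hb₂.2)
end
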